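/- arXiv:2306.10570 — 3 statements merged into one kernel-verified Lean document; each statement's English description precedes it below -/
import Mathlib

section
/- If a simple graph G contains k pairwise duplicate vertices v₁, …, v_k (all with the same open neighborhood N, and all of common degree d), then d is an eigenvalue of L(G) of multiplicity at least k - 1. -/
/-!
Duplicate vertices `u`, `w` give equal columns of the adjacency matrix and equal degrees, so
`L (e_u - e_w) = D (e_u - e_w) = d (e_u - e_w)`. The `k - 1` differences `e_{v i} - e_{v 0}`
are linearly independent, being the difference vectors of an affinely independent family.
-/

open Matrix

namespace SimpleGraph

variable {V : Type*} (G : SimpleGraph V) [DecidableRel G.Adj] {R : Type*} {u w : V}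

theorem adjMatrix_col_eq_of_neighborSet_eq [Zero R] [One R]
    (h : G.neighborSet u = G.neighborSet w) :
    (G.adjMatrix R).col u = (G.adjMatrix R).col w := by
  ext x
  have hadj : G.Adj x u ↔ G.Adj x w := by
    rw [G.adj_comm x, G.adj_comm x, ← mem_neighborSet, ← mem_neighborSet, h]
  simp only [col_apply, adjMatrix_apply, hadj]

variable [Fintype V]

theorem degree_eq_of_neighborSet_eq (h : G.neighborSet u = G.neighborSet w) :
    G.degree u = G.degree w := by
  simp only [← card_neighborSet_eq_degree, h]

variable [DecidableEq V]

theorem lapMatrix_mulVec_single_sub_single [Ring R] (h : G.neighborSet u = G.neighborSet w) :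
    G.lapMatrix R *ᵥ (Pi.single u 1 - Pi.single w 1) =
      (G.degree u : R) • (Pi.single u 1 - Pi.single w 1) := by
  have hadj : G.adjMatrix R *ᵥ (Pi.single u 1 - Pi.single w 1) = 0 := by
    rw [mulVec_sub, mulVec_single_one, mulVec_single_one,
      adjMatrix_col_eq_of_neighborSet_eq G h, sub_self]
  rw [lapMatrix, sub_mulVec, hadj, sub_zero, degMatrix, mulVec_sub, diagonal_mulVec_single,
    diagonal_mulVec_single, degree_eq_of_neighborSet_eq G h, ← smul_eq_mul, Pi.single_smul',
    Pi.single_smul', smul_sub]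

theorem single_sub_single_mem_eigenspace_lapMatrix [CommRing R]
    (h : G.neighborSet u = G.neighborSet w) :
    Pi.single u 1 - Pi.single w 1 ∈
      Module.End.eigenspace (toLin' (G.lapMatrix R)) (G.degree u : R) := by
  rw [Module.End.mem_eigenspace_iff, toLin'_apply, lapMatrix_mulVec_single_sub_single G h]

end SimpleGraph

/-- If `G` contains `k` pairwise duplicate vertices (all with the same open neighborhood,
hence the same degree `d`), then `d` is a Laplacian eigenvalue of multiplicity at least
`k - 1`, i.e. the corresponding eigenspace has dimension at least `k - 1`. -/
theorem duplicate_vertices_lap_eigenvalue_multiplicity {V : Type*} [Fintype V] [DecidableEq V]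
    (G : SimpleGraph V) [DecidableRel G.Adj] (k : ℕ) (hk : 0 < k)
    (v : Fin k → V) (hinj : Function.Injective v)
    (hdup : ∀ i j, G.neighborSet (v i) = G.neighborSet (v j)) :
    k - 1 ≤ Module.finrank ℝ
      (Module.End.eigenspace (Matrix.toLin' (G.lapMatrix ℝ))
        ((G.degree (v ⟨0, hk⟩) : ℝ))) := by
  set i₀ : Fin k := ⟨0, hk⟩
  let e : Fin k → V → ℝ := fun i => Pi.single (v i) 1
  have he : LinearIndependent ℝ e := by
    simpa [e, Function.comp_def] using (Pi.basisFun ℝ V).linearIndependent.comp v hinj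
  have hdiff : LinearIndependent ℝ fun i : {i // i ≠ i₀} => e i - e i₀ :=
    (affineIndependent_iff_linearIndependent_vsub ℝ e i₀).mp he.affineIndependent
  have hspan : Submodule.span ℝ (Set.range fun i : {i // i ≠ i₀} => e i - e i₀) ≤
      Module.End.eigenspace (toLin' (G.lapMatrix ℝ)) (G.degree (v i₀) : ℝ) := by
    rw [Submodule.span_le]
    rintro _ ⟨i, rfl⟩
    rw [← G.degree_eq_of_neighborSet_eq (hdup i i₀)]
    exact G.single_sub_single_mem_eigenspace_lapMatrix (hdup i i₀)
  calc k - 1 = Fintype.card {i // i ≠ i₀} := by simp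
    _ = Module.finrank ℝ (Submodule.span ℝ (Set.range fun i : {i // i ≠ i₀} => e i - e i₀)) :=
      (finrank_span_eq_card hdiff).symm
    _ ≤ _ := Submodule.finrank_mono hspan
end

section
/- If u and v are coduplicate vertices in a simple graph G (N[u] = N[v]) and μ is a Laplacian eigenvalue of G with an eigenvector x satisfying x(u) ≠ x(v), then μ = deg(u) + 1. -/
open Matrix

/-! Over the closed neighbourhood `N[w]` the Laplacian reads `(L x) w = (deg w + 1) x w - ∑_{N[w]} x`.
Coduplicate vertices `u`, `v` have `N[u] = N[v]`, hence equal degrees, so subtracting the two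
eigen-equations leaves `μ (x u - x v) = (deg u + 1) (x u - x v)`. -/

namespace SimpleGraph

variable {V : Type*} [Fintype V] [DecidableEq V] (G : SimpleGraph V) [DecidableRel G.Adj]

theorem insert_neighborFinset_eq_of_neighborSet_union_eq {u v : V}
    (h : G.neighborSet u ∪ {u} = G.neighborSet v ∪ {v}) :
    insert u (G.neighborFinset u) = insert v (G.neighborFinset v) := by
  apply Finset.coe_injective
  simpa [Set.union_comm, neighborFinset_def, Set.coe_toFinset] using h

theorem degree_eq_of_insert_neighborFinset_eq {u v : V}
    (h : insert u (G.neighborFinset u) = insert v (G.neighborFinset v)) :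
    G.degree u = G.degree v := by
  have hcard := congrArg Finset.card h
  rwa [Finset.card_insert_of_notMem (G.notMem_neighborFinset_self u),
    Finset.card_insert_of_notMem (G.notMem_neighborFinset_self v),
    card_neighborFinset_eq_degree, card_neighborFinset_eq_degree, Nat.add_right_cancel_iff]
    at hcard

theorem lapMatrix_mulVec_apply_eq_sub_sum_insert {R : Type*} [NonAssocRing R] (w : V)
    (x : V → R) :
    (G.lapMatrix R *ᵥ x) w = (G.degree w + 1) * x w - ∑ y ∈ insert w (G.neighborFinset w), x y := by
  rw [lapMatrix_mulVec_apply, Finset.sum_insert (G.notMem_neighborFinset_self w), add_mul,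
    one_mul]
  abel

theorem lapMatrix_mulVec_sub_of_insert_neighborFinset_eq {R : Type*} [NonAssocRing R] {u v : V}
    (h : insert u (G.neighborFinset u) = insert v (G.neighborFinset v)) (x : V → R) :
    (G.lapMatrix R *ᵥ x) u - (G.lapMatrix R *ᵥ x) v = (G.degree u + 1) * (x u - x v) := by
  rw [lapMatrix_mulVec_apply_eq_sub_sum_insert, lapMatrix_mulVec_apply_eq_sub_sum_insert, h,
    ← G.degree_eq_of_insert_neighborFinset_eq h, mul_sub]
  abel

end SimpleGraph

theorem lap_eigenvalue_eq_degree_succ_of_coduplicate_general {V : Type*} [Fintype V] [DecidableEq V]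
    (G : SimpleGraph V) [DecidableRel G.Adj] (u v : V)
    (hdup : G.neighborSet u ∪ {u} = G.neighborSet v ∪ {v}) (μ : ℝ) (x : V → ℝ)
    (heig : G.lapMatrix ℝ *ᵥ x = μ • x) (hxuv : x u ≠ x v) :
    μ = G.degree u + 1 := by
  have hsub := G.lapMatrix_mulVec_sub_of_insert_neighborFinset_eq
    (G.insert_neighborFinset_eq_of_neighborSet_union_eq hdup) x
  rw [heig, Pi.smul_apply, Pi.smul_apply, smul_eq_mul, smul_eq_mul, ← mul_sub] at hsub
  exact mul_right_cancel₀ (sub_ne_zero.mpr hxuv) hsub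

/-- If `u ≠ v` are coduplicate vertices of `G` (same closed neighborhood) and `μ` is a
Laplacian eigenvalue with an eigenvector `x` satisfying `x u ≠ x v`, then
`μ = deg u + 1`. -/
theorem lap_eigenvalue_eq_degree_succ_of_coduplicate {V : Type*} [Fintype V] [DecidableEq V]
    (G : SimpleGraph V) [DecidableRel G.Adj] (u v : V) (huv : u ≠ v)
    (hdup : G.neighborSet u ∪ {u} = G.neighborSet v ∪ {v}) (μ : ℝ) (x : V → ℝ)
    (hx : x ≠ 0) (heig : G.lapMatrix ℝ *ᵥ x = μ • x) (hxuv : x u ≠ x v) :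
    μ = G.degree u + 1 :=
  lap_eigenvalue_eq_degree_succ_of_coduplicate_general G u v hdup μ x heig hxuv
end

section
/- Let G₁ have n₁ vertices and G₂ have n₂ vertices. If both G₁ and G₂ are nonempty, then the Laplacian characteristic polynomial of the join G₁ ⊗ G₂ is x(x - n₁ - n₂) · ∏(x - μᵢ - n₂) · ∏(x - νⱼ - n₁), where μᵢ (resp. νⱼ) range over the Laplacian eigenvalues of G₁ (resp. G₂) other than one copy of 0. -/
open Matrix Polynomial Finset SimpleGraph

/-- The join of two vertex-disjoint graphs: all vertices of `G` are joined to all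
vertices of `H`, realized as the complement of the disjoint sum of the complements. -/
def SimpleGraph.joinGraph {α β : Type*} (G : SimpleGraph α) (H : SimpleGraph β) :
    SimpleGraph (α ⊕ β) :=
  (Gᶜ.sum Hᶜ)ᶜ

instance {α β : Type*} (G : SimpleGraph α) (H : SimpleGraph β)
    [DecidableRel G.Adj] [DecidableRel H.Adj] : DecidableRel (G.sum H).Adj := fun x y =>
  match x, y with
  | Sum.inl a, Sum.inl b => decidable_of_iff (G.Adj a b) (by simp)
  | Sum.inr a, Sum.inr b => decidable_of_iff (H.Adj a b) (by simp)
  | Sum.inl _, Sum.inr _ => .isFalse (by simp)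
  | Sum.inr _, Sum.inl _ => .isFalse (by simp)

instance {α β : Type*} [DecidableEq α] [DecidableEq β] (G : SimpleGraph α) (H : SimpleGraph β)
    [DecidableRel G.Adj] [DecidableRel H.Adj] : DecidableRel (G.joinGraph H).Adj := by
  unfold SimpleGraph.joinGraph; infer_instance

lemma join_adj_ll {α β : Type*} (G : SimpleGraph α) (H : SimpleGraph β) (a b : α) :
    (G.joinGraph H).Adj (Sum.inl a) (Sum.inl b) ↔ G.Adj a b := by
  simp only [joinGraph, compl_adj, SimpleGraph.sum_adj, compl_adj]
  constructor
  · rintro ⟨h1, h2⟩; simp at h1; tauto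
  · intro h; refine ⟨by simpa using h.ne, ?_⟩; simp [h.ne]; tauto

lemma join_adj_rr {α β : Type*} (G : SimpleGraph α) (H : SimpleGraph β) (a b : β) :
    (G.joinGraph H).Adj (Sum.inr a) (Sum.inr b) ↔ H.Adj a b := by
  simp only [joinGraph, compl_adj, SimpleGraph.sum_adj, compl_adj]
  constructor
  · rintro ⟨h1, h2⟩; simp at h1; tauto
  · intro h; refine ⟨by simpa using h.ne, ?_⟩; simp [h.ne]; tauto

lemma join_adj_lr {α β : Type*} (G : SimpleGraph α) (H : SimpleGraph β) (a : α) (b : β) :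
    (G.joinGraph H).Adj (Sum.inl a) (Sum.inr b) := by simp [joinGraph, compl_adj]

lemma join_adj_rl {α β : Type*} (G : SimpleGraph α) (H : SimpleGraph β) (a : β) (b : α) :
    (G.joinGraph H).Adj (Sum.inr a) (Sum.inl b) := by simp [joinGraph, compl_adj]

section JoinBlocks

variable {n₁ n₂ : ℕ} (G₁ : SimpleGraph (Fin n₁)) (G₂ : SimpleGraph (Fin n₂))
    [DecidableRel G₁.Adj] [DecidableRel G₂.Adj]

lemma join_degree_inl (a : Fin n₁) :
    (G₁.joinGraph G₂).degree (Sum.inl a) = G₁.degree a + n₂ := by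
  simp only [← card_neighborFinset_eq_degree, neighborFinset_eq_filter, card_filter]
  rw [Fintype.sum_sum_type]
  simp [join_adj_ll, join_adj_lr]

lemma join_degree_inr (b : Fin n₂) :
    (G₁.joinGraph G₂).degree (Sum.inr b) = G₂.degree b + n₁ := by
  simp only [← card_neighborFinset_eq_degree, neighborFinset_eq_filter, card_filter]
  rw [Fintype.sum_sum_type]
  simp [join_adj_rr, join_adj_rl]
  omega

lemma lap_join_blocks :
    (G₁.joinGraph G₂).lapMatrix ℝ =
      Matrix.fromBlocks (G₁.lapMatrix ℝ + (n₂ : ℝ) • 1) (-(Matrix.of fun _ _ => (1:ℝ)))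
        (-(Matrix.of fun _ _ => (1:ℝ))) (G₂.lapMatrix ℝ + (n₁ : ℝ) • 1) := by
  ext (a | a) (b | b) <;>
    simp [lapMatrix, degMatrix, Matrix.fromBlocks, adjMatrix_apply, join_adj_ll, join_adj_rr,
      join_adj_lr, join_adj_rl, join_degree_inl, join_degree_inr, Matrix.one_apply,
      Matrix.diagonal, Sum.inl.injEq, Matrix.smul_apply] <;>
  · by_cases h : a = b <;> simp [h]

end JoinBlocks

lemma charpoly_eval_aux {n : Type*} [Fintype n] [DecidableEq n] (M : Matrix n n ℝ) (x : ℝ) :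
    M.charpoly.eval x = (x • (1 : Matrix n n ℝ) - M).det := by
  rw [Matrix.charpoly, eval_det, matPolyEquiv_charmatrix]
  simp [smul_one_eq_diagonal]

lemma det_join_aux {m n : ℕ} (L₁ : Matrix (Fin m) (Fin m) ℝ) (L₂ : Matrix (Fin n) (Fin n) ℝ)
    (h₁ : ∀ i, ∑ k, L₁ i k = 0) (h₂ : ∀ i, ∑ k, L₂ i k = 0) (x : ℝ)
    (hdA : ((x - n) • (1 : Matrix (Fin m) (Fin m) ℝ) - L₁).det ≠ 0)
    (hxn : x - (n:ℝ) ≠ 0) (hxm : x - (m:ℝ) ≠ 0) :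
    (x • (1 : Matrix (Fin m ⊕ Fin n) (Fin m ⊕ Fin n) ℝ) -
        Matrix.fromBlocks (L₁ + (n : ℝ) • 1) (-(Matrix.of fun _ _ => (1:ℝ)))
          (-(Matrix.of fun _ _ => (1:ℝ))) (L₂ + (m : ℝ) • 1)).det =
      ((x - n) • (1 : Matrix (Fin m) (Fin m) ℝ) - L₁).det *
        ((x - m) • (1 : Matrix (Fin n) (Fin n) ℝ) - L₂).det *
        (1 - m * n * (x - n)⁻¹ * (x - m)⁻¹) := by
  set A : Matrix (Fin m) (Fin m) ℝ := (x - n) • 1 - L₁ with hA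
  set B : Matrix (Fin n) (Fin n) ℝ := (x - m) • 1 - L₂ with hB
  set J : Matrix (Fin m) (Fin n) ℝ := Matrix.of fun _ _ => (1:ℝ) with hJ
  set J' : Matrix (Fin n) (Fin m) ℝ := Matrix.of fun _ _ => (1:ℝ) with hJ'
  set Jn : Matrix (Fin n) (Fin n) ℝ := Matrix.of fun _ _ => (1:ℝ) with hJn
  have hblock : x • (1 : Matrix (Fin m ⊕ Fin n) (Fin m ⊕ Fin n) ℝ) -
      Matrix.fromBlocks (L₁ + (n : ℝ) • 1) (-J) (-J') (L₂ + (m : ℝ) • 1) =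
      Matrix.fromBlocks A J J' B := by
    ext (i | i) (j | j) <;>
      simp [hA, hB, hJ, hJ', Matrix.fromBlocks, Matrix.one_apply, sub_smul] <;> ring
  haveI : Invertible A := A.invertibleOfIsUnitDet (isUnit_iff_ne_zero.mpr hdA)
  rw [hblock, Matrix.det_fromBlocks₁₁]
  have hAJ : A * J = (x - n) • J := by
    ext i j
    simp [hA, hJ, Matrix.mul_apply, Matrix.sub_apply, Matrix.smul_apply, Matrix.one_apply,
      sub_mul, Finset.sum_sub_distrib, h₁ i]
  have hinvAJ : (⅟A) * J = (x - n)⁻¹ • J := by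
    have h1 : A * ((x - n)⁻¹ • J) = J := by
      rw [Matrix.mul_smul, hAJ, smul_smul, inv_mul_cancel₀ hxn, one_smul]
    calc (⅟A) * J = (⅟A) * (A * ((x - n)⁻¹ • J)) := by rw [h1]
      _ = (x - n)⁻¹ • J := by rw [← Matrix.mul_assoc, invOf_mul_self, Matrix.one_mul]
  have hJJ : J' * J = (m : ℝ) • Jn := by
    ext i j; simp [hJ, hJ', hJn, Matrix.mul_apply]
  have hschur : B - J' * ⅟A * J = B - ((m : ℝ) * (x - n)⁻¹) • Jn := by
    rw [Matrix.mul_assoc, hinvAJ, Matrix.mul_smul, hJJ, smul_smul]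
    ring_nf
  rw [hschur]
  have hBJ : B * Jn = (x - m) • Jn := by
    ext i j
    simp [hB, hJn, Matrix.mul_apply, Matrix.sub_apply, Matrix.smul_apply, Matrix.one_apply,
      sub_mul, Finset.sum_sub_distrib, h₂ i]
  set c : ℝ := (m : ℝ) * (x - n)⁻¹ with hc
  set d : ℝ := c * (x - m)⁻¹ with hd
  have hfact : B - c • Jn = B * (1 - d • Jn) := by
    rw [Matrix.mul_sub, Matrix.mul_one, Matrix.mul_smul, hBJ, smul_smul, hd]
    congr 2
    field_simp
  have hdet1 : (1 - d • Jn : Matrix (Fin n) (Fin n) ℝ).det = 1 - n * d := by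
    have h2 : (1 - d • Jn : Matrix (Fin n) (Fin n) ℝ) =
        1 + Matrix.replicateCol Unit (fun _ => -d) * Matrix.replicateRow Unit (fun _ => (1:ℝ)) := by
      ext i j
      simp [hJn, Matrix.mul_apply, Matrix.one_apply, sub_eq_add_neg]
    rw [h2, Matrix.det_one_add_replicateCol_mul_replicateRow]
    simp [dotProduct]
    ring
  rw [hfact, Matrix.det_mul, hdet1, hd, hc]
  ring

lemma lap_row_sum_zero {n : ℕ} (G : SimpleGraph (Fin n)) [DecidableRel G.Adj] (i : Fin n) :
    ∑ k, G.lapMatrix ℝ i k = 0 := by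
  have h := congrFun (G.lapMatrix_mulVec_const_eq_zero (R := ℝ)) i
  simpa [Matrix.mulVec, dotProduct] using h

/-- The Laplacian spectrum of the join `G₁ ⊗ G₂`: if the Laplacian eigenvalues of `G₁`
are `0 = μ 0 ≤ μ 1 ≤ … ≤ μ (n₁ - 1)` and those of `G₂` are `0 = ν 0 ≤ … ≤ ν (n₂ - 1)`,
then the Laplacian characteristic polynomial of the join is
`X (X - n₁ - n₂) ∏_{i ≠ 0} (X - μ i - n₂) ∏_{j ≠ 0} (X - ν j - n₁)`. -/
theorem lap_charpoly_join {n₁ n₂ : ℕ} (hn₁ : 0 < n₁) (hn₂ : 0 < n₂)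
    (G₁ : SimpleGraph (Fin n₁)) (G₂ : SimpleGraph (Fin n₂))
    [DecidableRel G₁.Adj] [DecidableRel G₂.Adj]
    (μ : Fin n₁ → ℝ) (ν : Fin n₂ → ℝ) (hμmono : Monotone μ) (hνmono : Monotone ν)
    (hμ0 : μ ⟨0, hn₁⟩ = 0) (hν0 : ν ⟨0, hn₂⟩ = 0)
    (hμ : (G₁.lapMatrix ℝ).charpoly = ∏ i, (X - C (μ i)))
    (hν : (G₂.lapMatrix ℝ).charpoly = ∏ j, (X - C (ν j))) :
    ((G₁.joinGraph G₂).lapMatrix ℝ).charpoly =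
      X * (X - C ((n₁ : ℝ) + n₂)) *
        (∏ i ∈ univ.erase ⟨0, hn₁⟩, (X - C (μ i + n₂))) *
        (∏ j ∈ univ.erase ⟨0, hn₂⟩, (X - C (ν j + n₁))) := by
  apply Polynomial.eq_of_infinite_eval_eq
  set Cb : ℝ := (n₁ : ℝ) + n₂ + ∑ i, |μ i| + ∑ j, |ν j| with hCb
  apply Set.Infinite.mono (s := Set.Ioi Cb) _ (Set.Ioi_infinite Cb)
  intro x hx
  simp only [Set.mem_Ioi] at hx
  simp only [Set.mem_setOf_eq]
  have hμle : ∀ i, μ i ≤ ∑ i, |μ i| := fun i =>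
    (le_abs_self _).trans
      (Finset.single_le_sum (f := fun i => |μ i|) (fun _ _ => abs_nonneg _) (mem_univ i))
  have hνle : ∀ j, ν j ≤ ∑ j, |ν j| := fun j =>
    (le_abs_self _).trans
      (Finset.single_le_sum (f := fun j => |ν j|) (fun _ _ => abs_nonneg _) (mem_univ j))
  have hμs : (0:ℝ) ≤ ∑ i, |μ i| := Finset.sum_nonneg fun _ _ => abs_nonneg _
  have hνs : (0:ℝ) ≤ ∑ j, |ν j| := Finset.sum_nonneg fun _ _ => abs_nonneg _
  have hfacμ : ∀ i, x - n₂ - μ i > 0 := by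
    intro i
    have := hμle i
    simp only [hCb] at hx
    push_cast at hx ⊢
    nlinarith [(Nat.cast_pos (α := ℝ)).mpr hn₁]
  have hfacν : ∀ j, x - n₁ - ν j > 0 := by
    intro j
    have := hνle j
    simp only [hCb] at hx
    push_cast at hx ⊢
    nlinarith [(Nat.cast_pos (α := ℝ)).mpr hn₂]
  have hxn₂ : x - (n₂:ℝ) ≠ 0 := by
    have := hfacμ ⟨0, hn₁⟩; rw [hμ0] at this; intro h; rw [h] at this; simp at this
  have hxn₁ : x - (n₁:ℝ) ≠ 0 := by
    have := hfacν ⟨0, hn₂⟩; rw [hν0] at this; intro h; rw [h] at this; simp at this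
  -- determinants of the diagonal blocks
  have hdA : ((x - n₂) • (1 : Matrix (Fin n₁) (Fin n₁) ℝ) - G₁.lapMatrix ℝ).det =
      ∏ i, (x - n₂ - μ i) := by
    have := charpoly_eval_aux (G₁.lapMatrix ℝ) (x - n₂)
    rw [hμ] at this
    rw [← this]
    simp [eval_prod]
  have hdB : ((x - n₁) • (1 : Matrix (Fin n₂) (Fin n₂) ℝ) - G₂.lapMatrix ℝ).det =
      ∏ j, (x - n₁ - ν j) := by
    have := charpoly_eval_aux (G₂.lapMatrix ℝ) (x - n₁)
    rw [hν] at this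
    rw [← this]
    simp [eval_prod]
  have hdA0 : ((x - n₂) • (1 : Matrix (Fin n₁) (Fin n₁) ℝ) - G₁.lapMatrix ℝ).det ≠ 0 := by
    rw [hdA]
    exact ne_of_gt (Finset.prod_pos fun i _ => hfacμ i)
  -- compute the LHS
  rw [charpoly_eval_aux, lap_join_blocks,
    det_join_aux (G₁.lapMatrix ℝ) (G₂.lapMatrix ℝ) (lap_row_sum_zero G₁) (lap_row_sum_zero G₂)
      x hdA0 hxn₂ hxn₁, hdA, hdB]
  -- compute the RHS
  have hsplitμ : ∏ i, (x - n₂ - μ i) =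
      (x - n₂) * ∏ i ∈ univ.erase ⟨0, hn₁⟩, (x - (μ i + n₂)) := by
    rw [← Finset.mul_prod_erase univ _ (mem_univ ⟨0, hn₁⟩), hμ0]
    rw [sub_zero]
    congr 1
    exact Finset.prod_congr rfl fun i _ => by ring
  have hsplitν : ∏ j, (x - n₁ - ν j) =
      (x - n₁) * ∏ j ∈ univ.erase ⟨0, hn₂⟩, (x - (ν j + n₁)) := by
    rw [← Finset.mul_prod_erase univ _ (mem_univ ⟨0, hn₂⟩), hν0]
    rw [sub_zero]
    congr 1
    exact Finset.prod_congr rfl fun j _ => by ring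
  rw [hsplitμ, hsplitν]
  simp only [eval_mul, eval_prod, eval_sub, eval_X, eval_C]
  field_simp
  ring
end
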